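/- When necessarily simultaneous conscious actions are performed, the fact that they are all being performed is common knowledge: Let G be a set of agents with actions {does_i}_{i∈G} that are necessarily simultaneous in R (for all i,j ∈ G, does_i is a necessary condition for does_j in R) and each conscious for its agent in R. Then for every j ∈ G, every i ∈ G, and every nonempty sequence i_1,...,i_m of agents from G, the nested-knowledge fact K_{i_1}···K_{i_m}(does_i) is a necessary condition for does_j in R. -/

import Mathlib

/-- Agent `i`'s knowledge operator in system `R` with local-state map `loc`. -/
def K {Agent LState Run : Type*} (R : Set Run) (loc : Run → ℕ → Agent → LState)
    (i : Agent) (φ : Run → ℕ → Prop) : Run → ℕ → Prop :=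
  fun r t => ∀ r' ∈ R, ∀ t' : ℕ, loc r' t' i = loc r t i → φ r' t'

/-- `ψ` is a necessary condition for the action `does` in system `R`. -/
def NecessaryFor {Run : Type*} (R : Set Run) (ψ does : Run → ℕ → Prop) : Prop :=
  ∀ r ∈ R, ∀ t : ℕ, does r t → ψ r t

/-- `does` is a conscious action for agent `i` in system `R`. -/
def Conscious {Agent LState Run : Type*} (R : Set Run) (loc : Run → ℕ → Agent → LState)
    (i : Agent) (does : Run → ℕ → Prop) : Prop :=
  ∀ r ∈ R, ∀ r' ∈ R, ∀ t t' : ℕ, loc r t i = loc r' t' i → (does r t ↔ does r' t')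

/-- The nested-knowledge fact `K_{i₁} K_{i₂} ⋯ K_{iₘ} ψ` for a list `[i₁,…,iₘ]`. -/
def Knest {Agent LState Run : Type*} (R : Set Run) (loc : Run → ℕ → Agent → LState)
    (l : List Agent) (ψ : Run → ℕ → Prop) : Run → ℕ → Prop :=
  l.foldr (fun i φ => K R loc i φ) ψ

theorem NecessaryFor.trans {Run : Type*} {R : Set Run} {φ ψ χ : Run → ℕ → Prop}
    (hφ : NecessaryFor R φ ψ) (hψ : NecessaryFor R ψ χ) : NecessaryFor R φ χ :=
  fun r hr t hχ => hφ r hr t (hψ r hr t hχ)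

section Knowledge

variable {Agent LState Run : Type*} {R : Set Run} {loc : Run → ℕ → Agent → LState}

/-- Whenever `i` performs a conscious action, it knows every necessary condition of that
action: all points `i` cannot distinguish from the current one are points of the action too. -/
theorem NecessaryFor.K_of_conscious {i : Agent} {ψ does : Run → ℕ → Prop}
    (hconscious : Conscious R loc i does) (hψ : NecessaryFor R ψ does) :
    NecessaryFor R (K R loc i ψ) does :=
  fun r hr t hdoes r' hr' t' hloc =>
    hψ r' hr' t' ((hconscious r' hr' r hr t' t hloc).mpr hdoes)

theorem Knest_cons (a : Agent) (l : List Agent) (ψ : Run → ℕ → Prop) :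
    Knest R loc (a :: l) ψ = K R loc a (Knest R loc l ψ) :=
  rfl

theorem necessaryFor_Knest {G : Set Agent} {does : Agent → Run → ℕ → Prop}
    (hsimul : ∀ i ∈ G, ∀ j ∈ G, NecessaryFor R (does i) (does j))
    (hconscious : ∀ i ∈ G, Conscious R loc i (does i))
    {ψ : Run → ℕ → Prop} (hψ : ∀ j ∈ G, NecessaryFor R ψ (does j)) :
    ∀ l : List Agent, (∀ a ∈ l, a ∈ G) → ∀ j ∈ G, NecessaryFor R (Knest R loc l ψ) (does j)
  | [], _ => hψ
  | a :: l, hl => fun j hj => by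
    have ha : a ∈ G := hl a List.mem_cons_self
    have hknest : NecessaryFor R (Knest R loc l ψ) (does a) :=
      necessaryFor_Knest hsimul hconscious hψ l
        (fun b hb => hl b (List.mem_cons_of_mem a hb)) a ha
    rw [Knest_cons]
    exact (hknest.K_of_conscious (hconscious a ha)).trans (hsimul a ha j hj)

end Knowledge

/-- When necessarily simultaneous conscious actions are performed, that they are
all being performed is common knowledge. -/
theorem simultaneous_actions_common_knowledge {Agent LState Run : Type*}
    (R : Set Run) (loc : Run → ℕ → Agent → LState)
    (G : Set Agent) (does : Agent → Run → ℕ → Prop)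
    (hsimul : ∀ i ∈ G, ∀ j ∈ G, NecessaryFor R (does i) (does j))
    (hconscious : ∀ i ∈ G, Conscious R loc i (does i)) :
    ∀ j ∈ G, ∀ i ∈ G, ∀ l : List Agent, l ≠ [] → (∀ a ∈ l, a ∈ G) →
      NecessaryFor R (Knest R loc l (does i)) (does j) :=
  fun j hj i hi l _ hl =>
    necessaryFor_Knest hsimul hconscious (hsimul i hi) l hl j hj
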